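/- arXiv:2203.17051 — 2 statements merged into one kernel-verified Lean document; each statement's English description precedes it below -/
import Mathlib

section
/- High-order opacity subsumes current-state opacity: let G be a DFA with secret states X_S ⊆ X and intruder observation alphabet Σ_a. Set Σ_o = Σ (the user observes everything) and T_spec = { (x, x) : x ∈ X \ X_S }. Then G is high-order opaque with respect to T_spec, Σ_a, Σ_o if and only if G is current-state opaque with respect to Σ_a and X_S. -/
/-- Natural projection: erase symbols not satisfying `S`. -/
def proj {A : Type*} (S : A → Bool) (s : List A) : List A := s.filter S

/-- Extension of a partial transition function to strings. -/
def dstar {A X : Type*} (δ : X → A → Option X) : X → List A → Option X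
  | x, [] => some x
  | x, a :: t => (δ x a).bind fun y => dstar δ y t

/-- Generated language of the DFA. -/
def lang {A X : Type*} (δ : X → A → Option X) (x0 : X) : Set (List A) :=
  {s | (dstar δ x0 s).isSome}

/-- High-order opacity subsumes current-state opacity: with Σ_o = Σ (so P_o is the
identity) and T_spec the diagonal over non-secret states, high-order opacity is
equivalent to current-state opacity. -/
theorem highOrder_subsumes_currentState {A X : Type*} (δ : X → A → Option X)
    (x0 : X) (Sa : A → Bool) (XS : Set X) :
    -- T_spec = { (x,x) : x ∉ X_S };  Know(α) as in the paper with P_o = id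
    (∀ s ∈ lang δ x0,
        (∀ u ∈ lang δ x0, ∀ v ∈ lang δ x0, u = s → v = s →
            ∀ xu xv, dstar δ x0 u = some xu → dstar δ x0 v = some xv →
              (xu, xv) ∉ {p : X × X | p.1 = p.2 ∧ p.1 ∉ XS}) →
        ∃ t ∈ lang δ x0,
          ¬ (∀ u ∈ lang δ x0, ∀ v ∈ lang δ x0, u = t → v = t →
              ∀ xu xv, dstar δ x0 u = some xu → dstar δ x0 v = some xv →
                (xu, xv) ∉ {p : X × X | p.1 = p.2 ∧ p.1 ∉ XS}) ∧
          proj Sa s = proj Sa t)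
    ↔
    (∀ s ∈ lang δ x0, ∀ x, dstar δ x0 s = some x → x ∈ XS →
        ∃ t ∈ lang δ x0, ∃ y, dstar δ x0 t = some y ∧ y ∉ XS ∧
          proj Sa s = proj Sa t) := by
  constructor
  · intro h s hs x hx hxS
    obtain ⟨t, ht, hnk, hp⟩ := h s hs (by
      intro u hu v hv hu' hv' xu xv hxu hxv
      subst hu'; subst hv'
      rw [hx] at hxu hxv
      injection hxu with e1; injection hxv with e2
      subst e1; subst e2
      rintro ⟨-, h2⟩; exact h2 hxS)
    push_neg at hnk
    obtain ⟨u, hu, v, hv, hut, hvt, xu, xv, hxu, hxv, hmem⟩ := hnk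
    exact ⟨t, ht, xu, hut ▸ hxu, hmem.2, hp⟩
  · intro h s hs hk
    obtain ⟨x, hx⟩ := Option.isSome_iff_exists.mp hs
    have hxS : x ∈ XS := by
      by_contra hn
      exact hk s hs s hs rfl rfl x x hx hx ⟨rfl, hn⟩
    obtain ⟨t, ht, y, hy, hyS, hp⟩ := h s hs x hx hxS
    refine ⟨t, ht, ?_, hp⟩
    intro hall
    exact hall t ht t ht rfl rfl y y hy hy ⟨rfl, hyS⟩
end

section
/- Characterization of high-order opacity via the semantic state-pair estimate (Theorem 2, semantic form): G is high-order opaque w.r.t. T_spec, Σ_a, Σ_o if and only if for every s ∈ L(G), E(s) ∩ T_spec ≠ ∅, where E(s) = { (δ(w₁), δ(w₂)) : ∃ t, w₁, w₂ ∈ L(G), P_a(s) = P_a(t), P_o(t) = P_o(w₁) = P_o(w₂) }. -/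
/-- Semantic state-pair estimate: pairs of states that, from the intruder's point
of view after observing P_a(s), the user might be unable to distinguish. -/
def Epairs {A X : Type*} (δ : X → A → Option X) (x0 : X) (So Sa : A → Bool)
    (s : List A) : Set (X × X) :=
  {p | ∃ t ∈ lang δ x0, ∃ w1 ∈ lang δ x0, ∃ w2 ∈ lang δ x0,
        proj Sa s = proj Sa t ∧ proj So t = proj So w1 ∧ proj So t = proj So w2 ∧
        dstar δ x0 w1 = some p.1 ∧ dstar δ x0 w2 = some p.2}

/-- Knowledge predicate: upon observation α the user can distinguish every pair in
T_spec. -/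
def Know {A X : Type*} (δ : X → A → Option X) (x0 : X) (So : A → Bool)
    (Tspec : Set (X × X)) (α : List A) : Prop :=
  ∀ u ∈ lang δ x0, ∀ v ∈ lang δ x0, proj So u = α → proj So v = α →
    ∀ xu xv, dstar δ x0 u = some xu → dstar δ x0 v = some xv → (xu, xv) ∉ Tspec

/-- High-order opacity (Definition 2). -/
def HighOrderOpaque {A X : Type*} (δ : X → A → Option X) (x0 : X)
    (So Sa : A → Bool) (Tspec : Set (X × X)) : Prop :=
  ∀ s ∈ lang δ x0, Know δ x0 So Tspec (proj So s) →
    ∃ t ∈ lang δ x0, ¬ Know δ x0 So Tspec (proj So t) ∧ proj Sa s = proj Sa t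

/-- Theorem 2, semantic form: high-order opacity holds iff every state-pair
estimate intersects the disambiguation task. -/
theorem highOrderOpaque_iff_Epairs {A X : Type*} (δ : X → A → Option X) (x0 : X)
    (So Sa : A → Bool) (Tspec : Set (X × X)) :
    HighOrderOpaque δ x0 So Sa Tspec ↔
      ∀ s ∈ lang δ x0, (Epairs δ x0 So Sa s ∩ Tspec).Nonempty := by
  constructor
  · intro hoo s hs
    by_cases hk : Know δ x0 So Tspec (proj So s)
    · obtain ⟨t, ht, hnk, ha⟩ := hoo s hs hk
      rw [Know] at hnk
      push_neg at hnk
      obtain ⟨u, hu, v, hv, hpu, hpv, xu, xv, hdu, hdv, hT⟩ := hnk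
      exact ⟨(xu, xv), ⟨t, ht, u, hu, v, hv, ha, hpu.symm, hpv.symm, hdu, hdv⟩, hT⟩
    · rw [Know] at hk
      push_neg at hk
      obtain ⟨u, hu, v, hv, hpu, hpv, xu, xv, hdu, hdv, hT⟩ := hk
      exact ⟨(xu, xv), ⟨s, hs, u, hu, v, hv, rfl, hpu.symm, hpv.symm, hdu, hdv⟩, hT⟩
  · intro h s hs hk
    obtain ⟨p, ⟨t, ht, w1, hw1, w2, hw2, ha, h1, h2, hd1, hd2⟩, hT⟩ := h s hs
    refine ⟨t, ht, ?_, ha⟩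
    intro hkt
    exact hkt w1 hw1 w2 hw2 h1.symm h2.symm p.1 p.2 hd1 hd2 hT
end
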